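/- arXiv:1808.09186 — 5 statements merged into one kernel-verified Lean document; each statement's English description precedes it below -/
import Mathlib

section
/- Let ε be a bounded measurable real function on [s₋, s₊] with n₁² ≤ ε(s) ≤ n₂² where 0 < n₁ < n₂, let κ ∈ ℂ with Arg κ ∈ (-π/2, 0), and let y be a nontrivial solution of y'' = -κ² ε y on [s₋, s₊]. Then for each τ ∈ [0, -2 Arg κ], the function G_τ(s) = Re( e^{i(τ - π/2)} conj(y(s)) y'(s) ) is strictly increasing on [s₋, s₊]. -/
/-!
With `E = e^{i(τ - π/2)}`, the equation `y'' = -κ² ε y` gives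
`G' = Re E · |y'|² - Re (E κ²) · ε · |y|²
    = sin τ · |y'|² - |κ|² sin (τ + 2 Arg κ) · ε · |y|²`,
and for `τ ∈ [0, -2 Arg κ]` both coefficients are nonnegative and not both zero. Hence `G` is
monotone, and if it were constant on a subinterval, `G'` would vanish there, forcing `y' ≡ 0`
(so `y = -y'' / (κ² ε) = 0`) or `y ≡ 0` on it. Either way `y` and `y'` vanish at an interior
point, and uniqueness for the linear ODE gives `y ≡ 0`, contradicting nontriviality.
-/

open Set Complex ComplexConjugate

theorem HasDerivAt.eq_zero_of_eqOn_const {F : Type*} [NormedAddCommGroup F] [NormedSpace ℝ F]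
    {f : ℝ → F} {f' c : F} {x : ℝ} {U : Set ℝ} (hf : HasDerivAt f f' x) (hU : IsOpen U)
    (hx : x ∈ U) (hfU : EqOn f (fun _ => c) U) : f' = 0 :=
  hf.unique <| (hasDerivAt_const x c).congr_of_eventuallyEq
    (Filter.eventually_of_mem (hU.mem_nhds hx) hfU)

theorem strictMonoOn_of_hasDerivAt_nonneg_of_exists_ne_zero {D : Set ℝ} (hD : Convex ℝ D)
    {f g : ℝ → ℝ} (hf : ∀ x ∈ D, HasDerivAt f (g x) x) (hg : ∀ x ∈ D, 0 ≤ g x)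
    (hne : ∀ u ∈ D, ∀ v ∈ D, u < v → ∃ x ∈ Ioo u v, g x ≠ 0) :
    StrictMonoOn f D := by
  have hmono : MonotoneOn f D :=
    monotoneOn_of_hasDerivWithinAt_nonneg hD
      (fun x hx => (hf x hx).continuousAt.continuousWithinAt)
      (fun x hx => (hf x (interior_subset hx)).hasDerivWithinAt)
      (fun x hx => hg x (interior_subset hx))
  intro u hu v hv huv
  refine (hmono hu hv huv.le).lt_of_ne fun hfuv => ?_
  obtain ⟨x, hx, hgx⟩ := hne u hu v hv huv
  have hUD : Icc u v ⊆ D := hD.ordConnected.out hu hv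
  refine hgx ((hf x (hUD (Ioo_subset_Icc_self hx))).eq_zero_of_eqOn_const (c := f u)
    isOpen_Ioo hx ?_)
  intro w hw
  have hwD := hUD (Ioo_subset_Icc_self hw)
  exact le_antisymm (hfuv ▸ hmono hwD hv hw.2.le) (hmono hu hwD hw.1.le)

theorem eqOn_zero_of_hasDerivAt_deriv_eq_mul {a b t₀ K : ℝ} {q y y' : ℝ → ℂ}
    (hq : ∀ t ∈ Icc a b, ‖q t‖ ≤ K)
    (hy : ∀ t ∈ Icc a b, HasDerivAt y (y' t) t)
    (hy' : ∀ t ∈ Icc a b, HasDerivAt y' (q t * y t) t)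
    (ht₀ : t₀ ∈ Ioo a b) (h0 : y t₀ = 0) (h0' : y' t₀ = 0) : EqOn y 0 (Icc a b) := by
  let v : ℝ → ℂ × ℂ → ℂ × ℂ := fun t p => (p.2, q t * p.1)
  have hv : ∀ t ∈ Ioo a b, LipschitzOnWith (max 1 K.toNNReal) (v t) univ := fun t ht =>
    (LipschitzWith.prod_snd.prodMk <|
      ((lipschitzWith_smul (q t)).comp LipschitzWith.prod_fst).weaken <| by
        simpa using NNReal.le_toNNReal_of_coe_le (hq t (Ioo_subset_Icc_self ht))).lipschitzOnWith
  have hsol : EqOn (fun t => (y t, y' t)) 0 (Icc a b) :=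
    ODE_solution_unique_of_mem_Icc hv ht₀
      (fun t ht => ((hy t ht).continuousAt.prodMk (hy' t ht).continuousAt).continuousWithinAt)
      (fun t ht => (hy t (Ioo_subset_Icc_self ht)).prodMk (hy' t (Ioo_subset_Icc_self ht)))
      (fun _ _ => mem_univ _) continuousOn_const
      (fun t _ => (hasDerivAt_const t (0 : ℂ × ℂ)).congr_deriv (by simp [v]; rfl))
      (fun _ _ => mem_univ _) (Prod.ext h0 h0')
  exact fun t ht => congrArg Prod.fst (hsol ht)

theorem hasDerivAt_re_mul_conj_mul_deriv {E q : ℂ} {y y' : ℝ → ℂ} {s : ℝ}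
    (hy : HasDerivAt y (y' s) s) (hy' : HasDerivAt y' (q * y s) s) :
    HasDerivAt (fun t => (E * conj (y t) * y' t).re)
      (E.re * normSq (y' s) + (E * q).re * normSq (y s)) s := by
  refine (reCLM.hasFDerivAt.comp_hasDerivAt s ((hy.star.const_mul E).mul hy')).congr_deriv ?_
  have : E * star (y' s) * y' s + E * star (y s) * (q * y s)
      = E * (conj (y' s) * y' s) + E * q * (conj (y s) * y s) := by
    simp only [starRingEnd_apply]; ring
  simp only [reCLM_apply, this, ← normSq_eq_conj_mul_self, add_re, re_mul_ofReal]

theorem re_exp_I_mul_sub_pi_div_two (τ : ℝ) :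
    (exp (I * ((τ : ℂ) - (Real.pi : ℂ) / 2))).re = Real.sin τ := by
  rw [show I * ((τ : ℂ) - (Real.pi : ℂ) / 2) = ((τ - Real.pi / 2 : ℝ) : ℂ) * I by
      push_cast; ring,
    exp_ofReal_mul_I_re, Real.cos_sub_pi_div_two]

theorem re_exp_I_mul_sub_pi_div_two_mul_sq (τ : ℝ) (κ : ℂ) :
    (exp (I * ((τ : ℂ) - (Real.pi : ℂ) / 2)) * κ ^ 2).re
      = ‖κ‖ ^ 2 * Real.sin (τ + 2 * κ.arg) := by
  have hκ : κ ^ 2 = ((‖κ‖ ^ 2 : ℝ) : ℂ) * exp (I * (2 * κ.arg)) := by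
    conv_lhs => rw [← norm_mul_exp_arg_mul_I κ]
    rw [mul_pow, ← exp_nat_mul]; push_cast; ring_nf
  rw [hκ, mul_left_comm, ← exp_add, re_ofReal_mul, ← re_exp_I_mul_sub_pi_div_two]
  push_cast; ring_nf

theorem strictMonoOn_re_mul_conj_mul_deriv {a b M : ℝ} {E k : ℂ} {c : ℝ → ℝ}
    {y y' : ℝ → ℂ}
    (hk : k ≠ 0) (hc : ∀ s ∈ Icc a b, 0 < c s ∧ c s ≤ M)
    (hE : 0 ≤ E.re) (hEk : (E * k).re ≤ 0) (hEk' : 0 < E.re ∨ (E * k).re < 0)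
    (hy : ∀ s ∈ Icc a b, HasDerivAt y (y' s) s)
    (hy' : ∀ s ∈ Icc a b, HasDerivAt y' (-(k * c s * y s)) s)
    (hnt : ∃ s ∈ Icc a b, y s ≠ 0) :
    StrictMonoOn (fun s => (E * conj (y s) * y' s).re) (Icc a b) := by
  set q : ℝ → ℂ := fun s => -(k * c s)
  have hyq : ∀ s ∈ Icc a b, HasDerivAt y' (q s * y s) s := fun s hs => by
    simpa only [q, neg_mul] using hy' s hs
  have hEq : ∀ s, (E * q s).re = -(E * k).re * c s := fun s => by
    simp only [q, mul_neg, ← mul_assoc, neg_re, re_mul_ofReal, neg_mul]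
  have hterm₁ : ∀ s, 0 ≤ E.re * normSq (y' s) := fun s => mul_nonneg hE (normSq_nonneg _)
  have hterm₂ : ∀ s ∈ Icc a b, 0 ≤ (E * q s).re * normSq (y s) := fun s hs => by
    rw [hEq]; exact mul_nonneg (mul_nonneg (neg_nonneg.2 hEk) (hc s hs).1.le) (normSq_nonneg _)
  refine strictMonoOn_of_hasDerivAt_nonneg_of_exists_ne_zero (convex_Icc a b)
    (fun s hs => hasDerivAt_re_mul_conj_mul_deriv (hy s hs) (hyq s hs))
    (fun s hs => add_nonneg (hterm₁ s) (hterm₂ s hs)) ?_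
  intro u hu v hv huv
  by_contra! hzero
  have hsub : Ioo u v ⊆ Icc a b := Ioo_subset_Icc_self.trans (Icc_subset_Icc hu.1 hv.2)
  have hzero' : ∀ s ∈ Ioo u v, E.re * normSq (y' s) = 0 ∧ (E * q s).re * normSq (y s) = 0 :=
    fun s hs => (add_eq_zero_iff_of_nonneg (hterm₁ s) (hterm₂ s (hsub hs))).1 (hzero s hs)
  obtain ⟨s₀, hs₀⟩ := nonempty_Ioo.2 huv
  have hq₀ : q s₀ ≠ 0 :=
    neg_ne_zero.2 (mul_ne_zero hk (ofReal_ne_zero.2 (hc s₀ (hsub hs₀)).1.ne'))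
  have hcauchy : y s₀ = 0 ∧ y' s₀ = 0 := by
    rcases hEk' with hE_pos | hEk_neg
    · have hy'0 : EqOn y' (fun _ => 0) (Ioo u v) := fun s hs =>
        normSq_eq_zero.1 ((mul_eq_zero.1 (hzero' s hs).1).resolve_left hE_pos.ne')
      have := (hyq s₀ (hsub hs₀)).eq_zero_of_eqOn_const isOpen_Ioo hs₀ hy'0
      exact ⟨(mul_eq_zero.1 this).resolve_left hq₀, hy'0 hs₀⟩
    · have hy0 : EqOn y (fun _ => 0) (Ioo u v) := fun s hs =>
        normSq_eq_zero.1 ((mul_eq_zero.1 (hzero' s hs).2).resolve_left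
          (by rw [hEq]; exact mul_ne_zero (neg_ne_zero.2 hEk_neg.ne) (hc s (hsub hs)).1.ne'))
      exact ⟨hy0 hs₀, (hy s₀ (hsub hs₀)).eq_zero_of_eqOn_const isOpen_Ioo hs₀ hy0⟩
  obtain ⟨s₁, hs₁, hys₁⟩ := hnt
  refine hys₁ (eqOn_zero_of_hasDerivAt_deriv_eq_mul (K := ‖k‖ * M) (fun s hs => ?_) hy hyq
    ⟨hu.1.trans_lt hs₀.1, hs₀.2.trans_le hv.2⟩ hcauchy.1 hcauchy.2 hs₁)
  rw [norm_neg, norm_mul, norm_real, Real.norm_of_nonneg (hc s hs).1.le]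
  exact mul_le_mul_of_nonneg_left (hc s hs).2 (norm_nonneg k)

theorem stmt1_general (sm sp n₁ n₂ : ℝ) (hn₁ : 0 < n₁)
    (ε : ℝ → ℝ) (hε : ∀ s ∈ Set.Icc sm sp, n₁ ^ 2 ≤ ε s ∧ ε s ≤ n₂ ^ 2)
    (κ : ℂ) (hκarg : κ.arg ∈ Set.Ioo (-(Real.pi / 2)) 0)
    (τ : ℝ) (hτ : τ ∈ Set.Icc 0 (-2 * κ.arg))
    (y y' : ℝ → ℂ)
    (hy : ∀ s ∈ Set.Icc sm sp, HasDerivAt y (y' s) s)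
    (hy' : ∀ s ∈ Set.Icc sm sp, HasDerivAt y' (-(κ ^ 2 * (ε s : ℂ) * y s)) s)
    (hnt : ∃ s ∈ Set.Icc sm sp, y s ≠ 0) :
    StrictMonoOn (fun s =>
      (Complex.exp (Complex.I * ((τ : ℂ) - (Real.pi : ℂ) / 2)) *
        (starRingEnd ℂ) (y s) * y' s).re) (Set.Icc sm sp) := by
  have hκ : κ ≠ 0 := by rintro rfl; simp at hκarg
  obtain ⟨hα₁, hα₂⟩ := hκarg
  obtain ⟨hτ₀, hτα⟩ := hτ
  have hsin : 0 ≤ Real.sin τ := Real.sin_nonneg_of_nonneg_of_le_pi hτ₀ (by linarith)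
  have hsin₂ : Real.sin (τ + 2 * κ.arg) ≤ 0 :=
    Real.sin_nonpos_of_nonpos_of_neg_pi_le (by linarith) (by linarith)
  have hstrict : 0 < Real.sin τ ∨ Real.sin (τ + 2 * κ.arg) < 0 := by
    rcases hτ₀.eq_or_lt with rfl | hτ₀
    · exact .inr (zero_add (2 * κ.arg) ▸
        Real.sin_neg_of_neg_of_neg_pi_lt (by linarith) (by linarith))
    · exact .inl (Real.sin_pos_of_pos_of_lt_pi hτ₀ (by linarith))
  have hκ₂ : 0 < ‖κ‖ ^ 2 := by positivity
  refine strictMonoOn_re_mul_conj_mul_deriv (k := κ ^ 2) (M := n₂ ^ 2) (pow_ne_zero 2 hκ)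
    (fun s hs => ⟨by nlinarith [(hε s hs).1], (hε s hs).2⟩) ?_ ?_ ?_ hy hy' hnt <;>
  simp only [re_exp_I_mul_sub_pi_div_two, re_exp_I_mul_sub_pi_div_two_mul_sq]
  · exact hsin
  · exact mul_nonpos_of_nonneg_of_nonpos hκ₂.le hsin₂
  · exact hstrict.imp_right (mul_neg_of_pos_of_neg hκ₂)

/-- Monotonicity lemma: for `Arg κ ∈ (-π/2, 0)`, `τ ∈ [0, -2 Arg κ]` and a
nontrivial solution `y` of `y'' = -κ² ε y` with `n₁² ≤ ε ≤ n₂²`, the function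
`G_τ(s) = Re(e^{i(τ-π/2)} conj(y(s)) y'(s))` is strictly increasing on `[s₋, s₊]`. -/
theorem stmt1 (sm sp n₁ n₂ : ℝ) (hsm : sm < sp) (hn₁ : 0 < n₁) (hn12 : n₁ < n₂)
    (ε : ℝ → ℝ) (hε : ∀ s ∈ Set.Icc sm sp, n₁ ^ 2 ≤ ε s ∧ ε s ≤ n₂ ^ 2)
    (κ : ℂ) (hκarg : κ.arg ∈ Set.Ioo (-(Real.pi / 2)) 0)
    (τ : ℝ) (hτ : τ ∈ Set.Icc 0 (-2 * κ.arg))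
    (y y' : ℝ → ℂ)
    (hy : ∀ s ∈ Set.Icc sm sp, HasDerivAt y (y' s) s)
    (hy' : ∀ s ∈ Set.Icc sm sp, HasDerivAt y' (-(κ ^ 2 * (ε s : ℂ) * y s)) s)
    (hnt : ∃ s ∈ Set.Icc sm sp, y s ≠ 0) :
    StrictMonoOn (fun s =>
      (Complex.exp (Complex.I * ((τ : ℂ) - (Real.pi : ℂ) / 2)) *
        (starRingEnd ℂ) (y s) * y' s).re) (Set.Icc sm sp) :=
  stmt1_general sm sp n₁ n₂ hn₁ ε hε κ hκarg τ hτ y y' hy hy' hnt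
end

section
/- Let κ with Arg κ ∈ (-π/2, 0), ε bounded measurable with n₁² ≤ ε ≤ n₂², and y a nontrivial solution of y'' = -κ² ε y on [s₋, s₊]. If y(s₀) = 0 for some s₀ ∈ [s₋, s₊], then y'(s₀) ≠ 0 and y has no other zero in [s₋, s₊], i.e., the set {s ∈ [s₋,s₊] : y(s) = 0} consists of at most one point. -/
/-!
Writing the equation as `y'' = w ρ y` with `w = -κ²` and `ρ = ε` real, the quantity
`G = Re(i w̄ ȳ y')` satisfies `G' = Im w · |y'|²`, because `Re(i w̄ w ρ |y|²) = 0`. For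
`Arg κ ∈ (-π/2, 0)` we have `Im w > 0`, so `G` is monotone. `G` vanishes at every zero of `y`;
between two zeros `a < b` it is therefore identically zero, which forces `y'(a) = 0`. Uniqueness
for the linear initial value problem then makes `y ≡ 0`, contradicting nontriviality. The same
uniqueness shows that `y'` cannot vanish at a zero of `y`.
-/

open Set Complex

open scoped NNReal ComplexConjugate

theorem eqOn_zero_of_hasDerivAt_of_lipschitzWith {E : Type*} [NormedAddCommGroup E]
    [NormedSpace ℝ E] {v : ℝ → E → E} {K : ℝ≥0} {f : ℝ → E} {a b t₀ : ℝ}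
    (hv : ∀ t ∈ Icc a b, LipschitzWith K (v t)) (hv₀ : ∀ t ∈ Icc a b, v t 0 = 0)
    (hf : ∀ t ∈ Icc a b, HasDerivAt f (v t (f t)) t) (ht₀ : t₀ ∈ Icc a b) (hf₀ : f t₀ = 0) :
    EqOn f 0 (Icc a b) := by
  have hcont : ContinuousOn f (Icc a b) := fun t ht => (hf t ht).continuousAt.continuousWithinAt
  have hzero : ∀ t ∈ Icc a b, ∀ u : Set ℝ, HasDerivWithinAt (0 : ℝ → E) (v t 0) u t :=
    fun t ht u => by rw [hv₀ t ht]; exact hasDerivWithinAt_const t u (0 : E)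
  have hleft : Icc a t₀ ⊆ Icc a b := Icc_subset_Icc_right ht₀.2
  have hright : Icc t₀ b ⊆ Icc a b := Icc_subset_Icc_left ht₀.1
  rw [← Icc_union_Icc_eq_Icc ht₀.1 ht₀.2]
  refine EqOn.union ?_ ?_
  · exact ODE_solution_unique_of_mem_Icc_left (s := fun _ => univ)
      (fun t ht => (hv t (hleft (Ioc_subset_Icc_self ht))).lipschitzOnWith)
      (hcont.mono hleft)
      (fun t ht => (hf t (hleft (Ioc_subset_Icc_self ht))).hasDerivWithinAt)
      (fun _ _ => trivial) continuousOn_const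
      (fun t ht => hzero t (hleft (Ioc_subset_Icc_self ht)) _)
      (fun _ _ => trivial) hf₀
  · exact ODE_solution_unique_of_mem_Icc_right (s := fun _ => univ)
      (fun t ht => (hv t (hright (Ico_subset_Icc_self ht))).lipschitzOnWith)
      (hcont.mono hright)
      (fun t ht => (hf t (hright (Ico_subset_Icc_self ht))).hasDerivWithinAt)
      (fun _ _ => trivial) continuousOn_const
      (fun t ht => hzero t (hright (Ico_subset_Icc_self ht)) _)
      (fun _ _ => trivial) hf₀

section SecondOrder

variable {E : Type*} [NormedAddCommGroup E] [NormedSpace ℂ E]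

theorem lipschitzWith_snd_prodMk_smul_fst {c : ℂ} {C : ℝ} (hc : ‖c‖ ≤ C) :
    LipschitzWith (max 1 C.toNNReal) fun p : E × E => (p.2, c • p.1) := by
  have hsmul : LipschitzWith C.toNNReal fun p : E × E => c • p.1 := by
    refine ((lipschitzWith_smul c).comp LipschitzWith.prod_fst).weaken ?_
    rw [mul_one, ← norm_toNNReal]
    exact Real.toNNReal_le_toNNReal hc
  exact LipschitzWith.prod_snd.prodMk hsmul

theorem eqOn_zero_of_hasDerivAt_smul {q : ℝ → ℂ} {C a b t₀ : ℝ}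
    (hq : ∀ s ∈ Icc a b, ‖q s‖ ≤ C) {y y' : ℝ → E}
    (hy : ∀ s ∈ Icc a b, HasDerivAt y (y' s) s)
    (hy' : ∀ s ∈ Icc a b, HasDerivAt y' (q s • y s) s)
    (ht₀ : t₀ ∈ Icc a b) (hy₀ : y t₀ = 0) (hy'₀ : y' t₀ = 0) :
    EqOn y 0 (Icc a b) := by
  have hpair : EqOn (fun s => (y s, y' s)) 0 (Icc a b) :=
    eqOn_zero_of_hasDerivAt_of_lipschitzWith (v := fun s p => (p.2, q s • p.1))
      (fun s hs => lipschitzWith_snd_prodMk_smul_fst (hq s hs)) (fun _ _ => by simp)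
      (fun s hs => (hy s hs).prodMk (hy' s hs)) ht₀ (by simp [hy₀, hy'₀])
  exact fun s hs => congrArg Prod.fst (hpair hs)

end SecondOrder

/-- Up to a positive factor, this is the paper's `G_τ` for `w = -κ²`. -/
noncomputable def phaseFlux (w : ℂ) (y y' : ℝ → ℂ) (t : ℝ) : ℝ :=
  (I * conj w * conj (y t) * y' t).re

theorem phaseFlux_eq_zero {w : ℂ} {y y' : ℝ → ℂ} {t : ℝ} (hy : y t = 0) :
    phaseFlux w y y' t = 0 := by
  simp [phaseFlux, hy]

theorem hasDerivAt_phaseFlux {w : ℂ} {ρ : ℝ} {y y' : ℝ → ℂ} {s : ℝ}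
    (hy : HasDerivAt y (y' s) s) (hy' : HasDerivAt y' (w * ρ * y s) s) :
    HasDerivAt (phaseFlux w y y') (w.im * normSq (y' s)) s := by
  have hprod : HasDerivAt (fun t => I * conj w * conj (y t) * y' t)
      (I * conj w * conj (y' s) * y' s + I * conj w * conj (y s) * (w * ρ * y s)) s :=
    (hy.star.const_mul (I * conj w)).mul hy'
  have hre : (I * conj w * conj (y' s) * y' s + I * conj w * conj (y s) * (w * ρ * y s)).re
      = w.im * normSq (y' s) := by
    simp only [add_re, mul_re, mul_im, conj_re, conj_im, I_re, I_im, ofReal_re, ofReal_im,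
      normSq_apply]
    ring
  have hreal := reCLM.hasFDerivAt.comp_hasDerivAt s hprod
  simp only [Function.comp_def, reCLM_apply, hre] at hreal
  exact hreal

theorem derivative_eq_zero_of_two_zeros {w : ℂ} (hw : w.im ≠ 0)
    {ρ : ℝ → ℝ} {y y' : ℝ → ℂ} {a b : ℝ} (hab : a < b)
    (hy : ∀ s ∈ Icc a b, HasDerivAt y (y' s) s)
    (hy' : ∀ s ∈ Icc a b, HasDerivAt y' (w * ρ s * y s) s)
    (ha : y a = 0) (hb : y b = 0) : y' a = 0 := by
  set G : ℝ → ℝ := fun t => phaseFlux w y y' t / w.im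
  have hG : ∀ s ∈ Icc a b, HasDerivAt G (normSq (y' s)) s := fun s hs => by
    simpa only [mul_div_cancel_left₀ _ hw] using
      (hasDerivAt_phaseFlux (hy s hs) (hy' s hs)).div_const w.im
  have hmono : MonotoneOn G (Icc a b) :=
    monotoneOn_of_hasDerivWithinAt_nonneg (convex_Icc a b)
      (fun s hs => (hG s hs).continuousAt.continuousWithinAt)
      (fun s hs => (hG s (interior_subset hs)).hasDerivWithinAt)
      (fun s _ => normSq_nonneg _)
  have hGa : G a = 0 := by simp [G, phaseFlux_eq_zero ha]
  have hGb : G b = 0 := by simp [G, phaseFlux_eq_zero hb]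
  have hamem : a ∈ Icc a b := left_mem_Icc.mpr hab.le
  have hG₀ : EqOn G 0 (Icc a b) := fun t ht =>
    le_antisymm (hGb ▸ hmono ht (right_mem_Icc.mpr hab.le) ht.2 :)
      (hGa ▸ hmono hamem ht ht.1 :)
  have hconst : HasDerivWithinAt G 0 (Icc a b) a :=
    (hasDerivWithinAt_const a _ (0 : ℝ)).congr hG₀ (hG₀ hamem)
  have hnormSq : normSq (y' a) = 0 :=
    (uniqueDiffOn_Icc hab a hamem).eq_deriv _ (hG a hamem).hasDerivWithinAt hconst
  exact normSq_eq_zero.mp hnormSq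

theorem im_neg_sq_pos_of_arg_mem_Ioo {κ : ℂ} (hκ : κ.arg ∈ Ioo (-(Real.pi / 2)) 0) :
    0 < (-κ ^ 2).im := by
  have him : κ.im < 0 := arg_neg_iff.mp hκ.2
  have hre : 0 < κ.re := by
    have habs : |κ.arg| < Real.pi / 2 := abs_lt.mpr ⟨hκ.1, hκ.2.trans Real.pi_div_two_pos⟩
    refine (abs_arg_lt_pi_div_two_iff.mp habs).resolve_right ?_
    rintro rfl
    simp at him
  simp only [neg_im, sq, mul_im]
  nlinarith

theorem stmt3_general (sm sp n₁ n₂ : ℝ)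
    (ε : ℝ → ℝ) (hε : ∀ s ∈ Set.Icc sm sp, n₁ ^ 2 ≤ ε s ∧ ε s ≤ n₂ ^ 2)
    (κ : ℂ) (hκarg : κ.arg ∈ Set.Ioo (-(Real.pi / 2)) 0)
    (y y' : ℝ → ℂ)
    (hy : ∀ s ∈ Set.Icc sm sp, HasDerivAt y (y' s) s)
    (hy' : ∀ s ∈ Set.Icc sm sp, HasDerivAt y' (-(κ ^ 2 * (ε s : ℂ) * y s)) s)
    (hnt : ∃ s ∈ Set.Icc sm sp, y s ≠ 0)
    (s₀ : ℝ) (hs₀ : s₀ ∈ Set.Icc sm sp) (hy₀ : y s₀ = 0) :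
    y' s₀ ≠ 0 ∧ ∀ s ∈ Set.Icc sm sp, y s = 0 → s = s₀ := by
  have hode : ∀ s ∈ Icc sm sp, HasDerivAt y' (-κ ^ 2 * (ε s : ℂ) * y s) s := fun s hs => by
    simpa only [neg_mul] using hy' s hs
  have hbound : ∀ s ∈ Icc sm sp, ‖-κ ^ 2 * (ε s : ℂ)‖ ≤ ‖κ‖ ^ 2 * n₂ ^ 2 := fun s hs => by
    have hεs : |ε s| ≤ n₂ ^ 2 :=
      abs_le.mpr ⟨by nlinarith [(hε s hs).1, sq_nonneg n₁, sq_nonneg n₂], (hε s hs).2⟩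
    rw [norm_mul, norm_neg, norm_pow, norm_real, Real.norm_eq_abs]
    exact mul_le_mul_of_nonneg_left hεs (by positivity)
  have hsimple : ∀ t ∈ Icc sm sp, y t = 0 → y' t ≠ 0 := fun t ht hyt hy't => by
    obtain ⟨s, hs, hys⟩ := hnt
    exact hys (eqOn_zero_of_hasDerivAt_smul (q := fun s => -κ ^ 2 * (ε s : ℂ))
      hbound hy hode ht hyt hy't hs)
  have hw : (-κ ^ 2).im ≠ 0 := (im_neg_sq_pos_of_arg_mem_Ioo hκarg).ne'
  have hno_two : ∀ a ∈ Icc sm sp, ∀ b ∈ Icc sm sp, a < b → y a = 0 → y b ≠ 0 :=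
    fun a ha b hb hab hya hyb => by
      have hsub : Icc a b ⊆ Icc sm sp := Icc_subset_Icc ha.1 hb.2
      exact hsimple a ha hya (derivative_eq_zero_of_two_zeros hw hab
        (fun s hs => hy s (hsub hs)) (fun s hs => hode s (hsub hs)) hya hyb)
  refine ⟨hsimple s₀ hs₀ hy₀, fun s hs hys => ?_⟩
  rcases lt_trichotomy s s₀ with h | h | h
  · exact absurd hy₀ (hno_two s hs s₀ hs₀ h hys)
  · exact h
  · exact absurd hys (hno_two s₀ hs₀ s hs h hy₀)

/-- For `Arg κ ∈ (-π/2,0)` and a nontrivial solution `y` of `y'' = -κ² ε y`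
with `n₁² ≤ ε ≤ n₂²`, if `y(s₀) = 0` for some `s₀ ∈ [s₋,s₊]`, then `y'(s₀) ≠ 0` and `s₀`
is the only zero of `y` in `[s₋,s₊]`. -/
theorem stmt3 (sm sp n₁ n₂ : ℝ) (hsm : sm < sp) (hn₁ : 0 < n₁) (hn12 : n₁ < n₂)
    (ε : ℝ → ℝ) (hε : ∀ s ∈ Set.Icc sm sp, n₁ ^ 2 ≤ ε s ∧ ε s ≤ n₂ ^ 2)
    (κ : ℂ) (hκarg : κ.arg ∈ Set.Ioo (-(Real.pi / 2)) 0)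
    (y y' : ℝ → ℂ)
    (hy : ∀ s ∈ Set.Icc sm sp, HasDerivAt y (y' s) s)
    (hy' : ∀ s ∈ Set.Icc sm sp, HasDerivAt y' (-(κ ^ 2 * (ε s : ℂ) * y s)) s)
    (hnt : ∃ s ∈ Set.Icc sm sp, y s ≠ 0)
    (s₀ : ℝ) (hs₀ : s₀ ∈ Set.Icc sm sp) (hy₀ : y s₀ = 0) :
    y' s₀ ≠ 0 ∧ ∀ s ∈ Set.Icc sm sp, y s = 0 → s = s₀ :=
  stmt3_general sm sp n₁ n₂ ε hε κ hκarg y y' hy hy' hnt s₀ hs₀ hy₀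
end

section
/- Let ε be constant equal to ϵ > 0 on (s₋, s₊), κ ∈ ℂ \ {0}, η₋, η₊ ∈ ℂ̂ with ϑ₋ := I(ϵ^{-1/2} η₋) ∉ {0, ∞} and ϑ₊ := I(ϵ^{-1/2} η₊) ∉ {0, ∞}, η₋ ≠ η₊. Then κ is an (η₋, η₊)-eigenvalue of the constant coefficient ϵ on (s₋, s₊) (i.e., there is a nontrivial solution y of y'' = -κ² ϵ y with y'(s_±)/(iκ y(s_±)) = η_±) if and only if κ = -i/(2(s₊-s₋)ϵ^{1/2}) · Log(ϑ₋/ϑ₊) + π n/((s₊-s₋) ϵ^{1/2}) for some integer n, where Log is the principal branch of the complex logarithm. -/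
/-!
Put `c = iκ√ϵ`. The equation becomes `y'' = c² y`, and the boundary condition at `s±` becomes
`ϑ± (y' + c y) = -(y' - c y)` (with `ϑ = -1` in the Dirichlet case `η = ∞`). Along the interval
`y' + c y` and `y' - c y` are multiplied by `exp (c (s - s₋))` and `exp (-c (s - s₋))`, and they
determine `y` since `c ≠ 0`. So a nontrivial solution exists iff `ϑ₊ exp (2c (s₊ - s₋)) = ϑ₋`;
taking the logarithm gives the arithmetic progression of eigenvalues.
-/

open Complex Set
open scoped Real

lemma exp_mul_mul_exp_neg_mul (z w : ℂ) : exp (z * w) * exp (-z * w) = 1 := by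
  rw [neg_mul, exp_neg, mul_inv_cancel₀ (exp_ne_zero _)]

lemma hasDerivAt_cexp_mul_sub (c : ℂ) (a s : ℝ) :
    HasDerivAt (fun t : ℝ => exp (c * (t - a))) (c * exp (c * (s - a))) s := by
  have h : HasDerivAt (fun t : ℝ => c * ((t : ℂ) - a)) c s := by
    simpa using ((ofRealCLM.hasDerivAt (x := s)).sub_const (a : ℂ)).const_mul c
  simpa [mul_comm] using h.cexp

lemma HasDerivAt.eq_zero_of_eqOn_Icc_zero {E : Type*} [NormedAddCommGroup E] [NormedSpace ℝ E]
    {f : ℝ → E} {f' : E} {a b m : ℝ} (hf : HasDerivAt f f' m) (hm : m ∈ Ioo a b)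
    (h0 : EqOn f 0 (Icc a b)) : f' = 0 :=
  hf.unique ((hasDerivAt_const m (0 : E)).congr_of_eventuallyEq
    (Filter.mem_of_superset (Icc_mem_nhds hm.1 hm.2) h0))

section ConstantCoefficientEquation

variable {c ϑa ϑb : ℂ} {a b : ℝ} {y y' : ℝ → ℂ}

lemma eq_exp_mul_of_hasDerivAt {u : ℝ → ℂ} (hu : ∀ s ∈ Icc a b, HasDerivAt u (c * u s) s) :
    ∀ s ∈ Icc a b, u s = exp (c * (s - a)) * u a := by
  have hconst : ∀ s ∈ Icc a b, exp (-c * (s - a)) * u s = exp (-c * (a - a)) * u a := by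
    have hderiv : ∀ s ∈ Icc a b,
        HasDerivAt (fun t : ℝ => exp (-c * (t - a)) * u t) 0 s := fun s hs =>
      ((hasDerivAt_cexp_mul_sub (-c) a s).mul (hu s hs)).congr_deriv (by ring)
    exact constant_of_has_deriv_right_zero
      (fun s hs => (hderiv s hs).continuousAt.continuousWithinAt)
      (fun s hs => (hderiv s (Ico_subset_Icc_self hs)).hasDerivWithinAt)
  intro s hs
  have h := hconst s hs
  rw [sub_self, mul_zero, exp_zero, one_mul] at h
  linear_combination exp (c * (s - a)) * h - u s * exp_mul_mul_exp_neg_mul c (s - a)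

lemma add_mul_eq_exp_mul (hy : ∀ s ∈ Icc a b, HasDerivAt y (y' s) s)
    (hy' : ∀ s ∈ Icc a b, HasDerivAt y' (c ^ 2 * y s) s) :
    ∀ s ∈ Icc a b, y' s + c * y s = exp (c * (s - a)) * (y' a + c * y a) :=
  eq_exp_mul_of_hasDerivAt fun s hs =>
    ((hy' s hs).add ((hy s hs).const_mul c)).congr_deriv (by ring)

lemma boundary_relation_of_solution (hc : c ≠ 0) (hy : ∀ s ∈ Icc a b, HasDerivAt y (y' s) s)
    (hy' : ∀ s ∈ Icc a b, HasDerivAt y' (c ^ 2 * y s) s) (hne : ∃ s ∈ Icc a b, y s ≠ 0)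
    (ha : ϑa * (y' a + c * y a) = -(y' a - c * y a))
    (hb : ϑb * (y' b + c * y b) = -(y' b - c * y b)) :
    ϑb * exp (c * (b - a)) ^ 2 = ϑa := by
  obtain ⟨s₀, hs₀, hys₀⟩ := hne
  have hbI : b ∈ Icc a b := right_mem_Icc.mpr (hs₀.1.trans hs₀.2)
  have hu := add_mul_eq_exp_mul hy hy'
  have hv := add_mul_eq_exp_mul (c := -c) hy (by simpa only [neg_sq] using hy')
  have hua : y' a + c * y a ≠ 0 := by
    intro hua
    have hva : y' a + -c * y a = 0 := by linear_combination ha - ϑa * hua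
    apply hys₀
    have h2c : 2 * c * y s₀ = 0 := by
      linear_combination hu s₀ hs₀ - hv s₀ hs₀ + exp (c * (s₀ - a)) * hua
        - exp (-c * (s₀ - a)) * hva
    simpa [hc] using h2c
  refine mul_right_cancel₀ hua ?_
  linear_combination exp (c * (b - a)) * hb - ϑb * exp (c * (b - a)) * hu b hbI
    - exp (c * (b - a)) * hv b hbI - (y' a - c * y a) * exp_mul_mul_exp_neg_mul c (b - a) - ha

lemma exists_solution_of_boundary_relation (hc : c ≠ 0) (hab : a < b)
    (h : ϑb * exp (c * (b - a)) ^ 2 = ϑa) :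
    ∃ y y' : ℝ → ℂ, (∀ s ∈ Icc a b, HasDerivAt y (y' s) s) ∧
      (∀ s ∈ Icc a b, HasDerivAt y' (c ^ 2 * y s) s) ∧ (∃ s ∈ Icc a b, y s ≠ 0) ∧
      ϑa * (y' a + c * y a) = -(y' a - c * y a) ∧
      ϑb * (y' b + c * y b) = -(y' b - c * y b) := by
  set E : ℝ → ℂ := fun s => exp (c * (s - a))
  set F : ℝ → ℂ := fun s => exp (-c * (s - a))
  have hE : ∀ s, HasDerivAt E (c * E s) s := hasDerivAt_cexp_mul_sub c a
  have hF : ∀ s, HasDerivAt F (-c * F s) s := hasDerivAt_cexp_mul_sub (-c) a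
  have hEa : E a = 1 := by simp [E]
  have hFa : F a = 1 := by simp [F]
  refine ⟨fun s => E s + ϑa * F s, fun s => c * E s - c * ϑa * F s,
    fun s _ => ((hE s).add ((hF s).const_mul ϑa)).congr_deriv (by ring),
    fun s _ => (((hE s).const_mul c).sub ((hF s).const_mul (c * ϑa))).congr_deriv (by ring),
    ?_, by linear_combination 2 * c * ϑa * (hEa - hFa),
    by linear_combination (2 * c * F b) * h - 2 * c * ϑb * E b * exp_mul_mul_exp_neg_mul c (b - a)⟩
  -- `y' + c y = 2c E` never vanishes, while it would at the midpoint if `y` vanished on `[a, b]`.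
  by_contra! h0
  have hmid : (a + b) / 2 ∈ Ioo a b := ⟨by linarith, by linarith⟩
  have hderiv := ((hE _).add ((hF _).const_mul ϑa)).eq_zero_of_eqOn_Icc_zero hmid h0
  have hmid0 := h0 ((a + b) / 2) (Ioo_subset_Icc_self hmid)
  have : 2 * c * E ((a + b) / 2) = 0 := by linear_combination hderiv + c * hmid0
  simp [hc, E] at this

lemma exists_nontrivial_solution_iff (hc : c ≠ 0) (hab : a < b) :
    (∃ y y' : ℝ → ℂ, (∀ s ∈ Icc a b, HasDerivAt y (y' s) s) ∧
      (∀ s ∈ Icc a b, HasDerivAt y' (c ^ 2 * y s) s) ∧ (∃ s ∈ Icc a b, y s ≠ 0) ∧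
      ϑa * (y' a + c * y a) = -(y' a - c * y a) ∧
      ϑb * (y' b + c * y b) = -(y' b - c * y b)) ↔
    ϑb * exp (c * (b - a)) ^ 2 = ϑa :=
  ⟨fun ⟨_, _, hy, hy', hne, ha, hb⟩ => boundary_relation_of_solution hc hy hy' hne ha hb,
    exists_solution_of_boundary_relation hc hab⟩

end ConstantCoefficientEquation

lemma mul_exp_sq_eq_iff_exists_int {ϑa ϑb z : ℂ} (ha : ϑa ≠ 0) (hb : ϑb ≠ 0) :
    ϑb * exp z ^ 2 = ϑa ↔ ∃ n : ℤ, 2 * z = log (ϑa / ϑb) + n * (2 * π * I) := by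
  rw [mul_comm, ← eq_div_iff hb, sq, ← exp_add, ← two_mul]
  conv_lhs => rw [← exp_log (div_ne_zero ha hb)]
  exact exp_eq_exp_iff_exists_int

lemma two_mul_I_mul_eq_iff {κ r L w n : ℂ} (hr : r ≠ 0) (hL : L ≠ 0) :
    2 * (I * κ * r * L) = w + n * (2 * π * I) ↔ κ = -I / (2 * L * r) * w + π * n / (L * r) := by
  constructor <;> intro h
  · field_simp
    linear_combination -I * h + (2 * κ * L * r - 2 * π * n) * I_sq
  · rw [h]
    field_simp
    linear_combination -w * I_sq

lemma eq_zero_iff_neg_one_mul {c : ℂ} (hc : c ≠ 0) (Y Y' : ℂ) :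
    Y = 0 ↔ -1 * (Y' + c * Y) = -(Y' - c * Y) := by
  constructor
  · rintro rfl
    ring
  · intro h
    have h2 : 2 * c * Y = 0 := by linear_combination -h
    simpa [hc] using h2

lemma eq_I_mul_mul_iff_cayley_mul {κ r h : ℂ} (hr : r ≠ 0) (hh : h ≠ -r) (Y Y' : ℂ) :
    Y' = I * κ * h * Y ↔
      (1 - h / r) / (1 + h / r) * (Y' + I * κ * r * Y) = -(Y' - I * κ * r * Y) := by
  have hrh : r + h ≠ 0 := fun h0 => hh (by linear_combination h0)
  have hcayley : (1 - h / r) / (1 + h / r) = (r - h) / (r + h) := by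
    field_simp
  rw [hcayley, div_mul_eq_mul_div, div_eq_iff hrh]
  constructor <;> intro H
  · linear_combination 2 * r * H
  · have h2 : 2 * r * (Y' - I * κ * h * Y) = 0 := by linear_combination H
    simpa [hr, sub_eq_zero] using h2

/-- Eigenvalues of the constant resonator. Let `ε ≡ ϵ > 0` on `(s₋,s₊)`,
`η₋ ≠ η₊` in the Riemann sphere `ℂ ∪ {∞}` (encoded as `OnePoint ℂ`, `none = ∞`),
with ilog-phases `ϑ_± = I(ϵ^{-1/2} η_±) ∉ {0, ∞}`. Then `κ ≠ 0` is an
`(η₋,η₊)`-eigenvalue (boundary conditions `y'(s_±) = iκ η_± y(s_±)`, interpreted as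
`y(s_±) = 0` when `η_± = ∞`) iff
`κ = -i/(2(s₊-s₋)√ϵ) Log(ϑ₋/ϑ₊) + πn/((s₊-s₋)√ϵ)` for some `n : ℤ`. -/
theorem stmt12 (sm sp ϵ : ℝ) (hs : sm < sp) (hϵ : 0 < ϵ)
    (κ : ℂ) (hκ : κ ≠ 0)
    (ηm ηp : OnePoint ℂ) (hη : ηm ≠ ηp)
    (ϑm ϑp : ℂ) (hϑm0 : ϑm ≠ 0) (hϑp0 : ϑp ≠ 0)
    (hϑm : match ηm with
      | none => ϑm = -1
      | some h => h ≠ -(Real.sqrt ϵ : ℂ) ∧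
          ϑm = (1 - h / (Real.sqrt ϵ : ℂ)) / (1 + h / (Real.sqrt ϵ : ℂ)))
    (hϑp : match ηp with
      | none => ϑp = -1
      | some h => h ≠ -(Real.sqrt ϵ : ℂ) ∧
          ϑp = (1 - h / (Real.sqrt ϵ : ℂ)) / (1 + h / (Real.sqrt ϵ : ℂ))) :
    (∃ y y' : ℝ → ℂ,
        (∀ s ∈ Set.Icc sm sp, HasDerivAt y (y' s) s) ∧
        (∀ s ∈ Set.Icc sm sp, HasDerivAt y' (-(κ ^ 2 * (ϵ : ℂ) * y s)) s) ∧
        (∃ s ∈ Set.Icc sm sp, y s ≠ 0) ∧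
        (match ηm with
          | none => y sm = 0
          | some h => y' sm = Complex.I * κ * h * y sm) ∧
        (match ηp with
          | none => y sp = 0
          | some h => y' sp = Complex.I * κ * h * y sp)) ↔
    ∃ n : ℤ,
      κ = -Complex.I / (2 * ((sp : ℂ) - (sm : ℂ)) * (Real.sqrt ϵ : ℂ)) *
            Complex.log (ϑm / ϑp)
          + (Real.pi : ℂ) * (n : ℂ) / (((sp : ℂ) - (sm : ℂ)) * (Real.sqrt ϵ : ℂ)) := by
  have hr : (Real.sqrt ϵ : ℂ) ≠ 0 := ofReal_ne_zero.mpr (Real.sqrt_pos.mpr hϵ).ne'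
  have hL : (sp : ℂ) - sm ≠ 0 := sub_ne_zero.mpr (ofReal_injective.ne hs.ne')
  have hc : I * κ * Real.sqrt ϵ ≠ 0 := by simp [hκ, hr]
  have hsq : ∀ z : ℂ, -(κ ^ 2 * (ϵ : ℂ) * z) = (I * κ * Real.sqrt ϵ) ^ 2 * z := fun z => by
    rw [mul_pow, mul_pow, ← ofReal_pow, Real.sq_sqrt hϵ.le, I_sq]; ring
  calc _ ↔ ∃ y y' : ℝ → ℂ, (∀ s ∈ Icc sm sp, HasDerivAt y (y' s) s) ∧
        (∀ s ∈ Icc sm sp, HasDerivAt y' ((I * κ * Real.sqrt ϵ) ^ 2 * y s) s) ∧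
        (∃ s ∈ Icc sm sp, y s ≠ 0) ∧
        ϑm * (y' sm + I * κ * Real.sqrt ϵ * y sm) = -(y' sm - I * κ * Real.sqrt ϵ * y sm) ∧
        ϑp * (y' sp + I * κ * Real.sqrt ϵ * y sp) = -(y' sp - I * κ * Real.sqrt ϵ * y sp) := by
        refine exists₂_congr fun y y' => and_congr_right' <| and_congr (by simp only [hsq]) <|
          and_congr_right' <| and_congr ?_ ?_
        · cases ηm with
          | infty => obtain rfl : ϑm = -1 := hϑm; exact eq_zero_iff_neg_one_mul hc _ _
          | coe g => obtain ⟨hg, rfl⟩ := hϑm; exact eq_I_mul_mul_iff_cayley_mul hr hg _ _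
        · cases ηp with
          | infty => obtain rfl : ϑp = -1 := hϑp; exact eq_zero_iff_neg_one_mul hc _ _
          | coe g => obtain ⟨hg, rfl⟩ := hϑp; exact eq_I_mul_mul_iff_cayley_mul hr hg _ _
    _ ↔ _ := by
      rw [exists_nontrivial_solution_iff hc hs, mul_exp_sq_eq_iff_exists_int hϑm0 hϑp0]
      exact exists_congr fun n => by rw [two_mul_I_mul_eq_iff hr hL]
end

section
/- Explicit odd-mode resonance of a single half-wave layer: let 0 < n₁ ≤ n_∞ < n₂, s₊ > 0, and define ε₀(s) = n₂² for |s| ≤ s₊ and ε₀(s) = n_∞² for |s| > s₊. Then κ₀ = -(i/(2 s₊ n₂)) Log( (n₂ + n_∞)/(n₂ - n_∞) ) + π/(2 s₊ n₂) is a resonance of ε₀ with an odd mode; explicitly, the function y(s) = sin(n₂ κ₀ s) on [-s₊, s₊], extended outgoing outside, is an odd nontrivial solution of y'' = -κ₀² ε₀ y satisfying y'(s₊) = i n_∞ κ₀ y(s₊). -/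
/-!
With `L = log((n₂ + n_∞)/(n₂ - n_∞))` one has `n₂ κ₀ s₊ = π/2 - i L/2`, so at the edge of the layer
`cos` and `sin` become `i sinh(L/2)` and `cosh(L/2)`. The outgoing condition then reduces to
`tanh(L/2) = n_∞/n₂`, which is exactly what the choice of `L` gives.
-/

open Complex

theorem hasDerivAt_sin_mul_ofReal (c : ℂ) (s : ℝ) :
    HasDerivAt (fun u : ℝ => sin (c * u)) (c * cos (c * s)) s := by
  simpa [mul_comm] using ((hasDerivAt_id (s : ℂ)).const_mul c).csin.comp_ofReal

theorem hasDerivAt_cos_mul_ofReal (c : ℂ) (s : ℝ) :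
    HasDerivAt (fun u : ℝ => cos (c * u)) (-(c * sin (c * s))) s := by
  simpa [mul_comm] using ((hasDerivAt_id (s : ℂ)).const_mul c).ccos.comp_ofReal

theorem Real.mul_sinh_half_log_div_eq {a b : ℝ} (h : |b| < a) :
    a * Real.sinh (Real.log ((a + b) / (a - b)) / 2) =
      b * Real.cosh (Real.log ((a + b) / (a - b)) / 2) := by
  obtain ⟨hab, hba⟩ := abs_lt.1 h
  set e := Real.exp (Real.log ((a + b) / (a - b)) / 2)
  have he : e * e * (a - b) = a + b := by
    rw [← Real.exp_add, add_halves, Real.exp_log (div_pos (by linarith) (by linarith))]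
    field_simp [(by linarith : a - b ≠ 0)]
  rw [Real.sinh_eq, Real.cosh_eq, Real.exp_neg]
  field_simp
  linear_combination he

theorem sin_pi_div_two_sub_mul_I_ne_zero (t : ℝ) : sin (Real.pi / 2 - t * I) ≠ 0 := by
  rw [sin_pi_div_two_sub, cos_mul_I, ← ofReal_cosh]
  exact ofReal_ne_zero.2 (Real.cosh_pos t).ne'

theorem mul_cos_pi_div_two_sub_mul_I {a b t : ℝ} (h : a * Real.sinh t = b * Real.cosh t) :
    a * cos (Real.pi / 2 - t * I) = I * b * sin (Real.pi / 2 - t * I) := by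
  rw [sin_pi_div_two_sub, cos_pi_div_two_sub, cos_mul_I, sin_mul_I, ← ofReal_cosh, ← ofReal_sinh]
  have hC : (a : ℂ) * Real.sinh t = b * Real.cosh t := by exact_mod_cast h
  linear_combination I * hC

/-- Explicit odd-mode resonance of a single half-wave layer. With
`0 < n₁ ≤ n_∞ < n₂`, `s₊ > 0`, `ε₀ = n₂²` on `[-s₊,s₊]` and `= n_∞²` outside, the number
`κ₀ = -(i/(2 s₊ n₂)) Log((n₂+n_∞)/(n₂-n_∞)) + π/(2 s₊ n₂)` is a resonance with odd mode
`y(s) = sin(n₂ κ₀ s)`: `y` is odd, nontrivial, solves `y'' = -κ₀² ε₀ y` on `[-s₊,s₊]`,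
and satisfies the outgoing condition `y'(s₊) = i n_∞ κ₀ y(s₊)`. -/
theorem stmt17 (n₁ ninf n₂ sp : ℝ)
    (hn₁ : 0 < n₁) (h1i : n₁ ≤ ninf) (hi2 : ninf < n₂) (hsp : 0 < sp)
    (ε₀ : ℝ → ℝ)
    (hε₀ : ∀ s : ℝ, (|s| ≤ sp → ε₀ s = n₂ ^ 2) ∧ (sp < |s| → ε₀ s = ninf ^ 2))
    (κ₀ : ℂ)
    (hκ₀ : κ₀ = -(Complex.I / (2 * (sp : ℂ) * (n₂ : ℂ))) *
        (Real.log ((n₂ + ninf) / (n₂ - ninf)) : ℂ)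
        + (Real.pi : ℂ) / (2 * (sp : ℂ) * (n₂ : ℂ))) :
    (∀ s : ℝ, Complex.sin ((n₂ : ℂ) * κ₀ * ((-s : ℝ) : ℂ)) =
        -Complex.sin ((n₂ : ℂ) * κ₀ * (s : ℂ))) ∧
    (∃ s : ℝ, Complex.sin ((n₂ : ℂ) * κ₀ * (s : ℂ)) ≠ 0) ∧
    (∀ s : ℝ, HasDerivAt (fun u : ℝ => Complex.sin ((n₂ : ℂ) * κ₀ * (u : ℂ)))
        ((n₂ : ℂ) * κ₀ * Complex.cos ((n₂ : ℂ) * κ₀ * (s : ℂ))) s) ∧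
    (∀ s ∈ Set.Icc (-sp) sp,
        HasDerivAt (fun u : ℝ => (n₂ : ℂ) * κ₀ * Complex.cos ((n₂ : ℂ) * κ₀ * (u : ℂ)))
          (-(κ₀ ^ 2 * (ε₀ s : ℂ) * Complex.sin ((n₂ : ℂ) * κ₀ * (s : ℂ)))) s) ∧
    ((n₂ : ℂ) * κ₀ * Complex.cos ((n₂ : ℂ) * κ₀ * (sp : ℂ)) =
        Complex.I * (ninf : ℂ) * κ₀ * Complex.sin ((n₂ : ℂ) * κ₀ * (sp : ℂ))) := by
  have hninf : 0 < ninf := hn₁.trans_le h1i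
  set L := Real.log ((n₂ + ninf) / (n₂ - ninf))
  have hz : (n₂ : ℂ) * κ₀ * sp = Real.pi / 2 - (L / 2 : ℝ) * I := by
    have : (n₂ : ℂ) ≠ 0 := ofReal_ne_zero.2 (by linarith)
    rw [hκ₀]
    field_simp [ofReal_ne_zero.2 hsp.ne']
    push_cast
    ring
  refine ⟨fun s => ?_, ⟨sp, hz ▸ sin_pi_div_two_sub_mul_I_ne_zero _⟩,
    hasDerivAt_sin_mul_ofReal _, fun s hs => ?_, ?_⟩
  · rw [ofReal_neg, mul_neg, sin_neg]
  · rw [(hε₀ s).1 (abs_le.2 hs)]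
    exact ((hasDerivAt_cos_mul_ofReal _ s).const_mul _).congr_deriv (by push_cast; ring)
  · have h := mul_cos_pi_div_two_sub_mul_I
      (Real.mul_sinh_half_log_div_eq (abs_lt.2 ⟨by linarith, hi2⟩))
    rw [hz]
    linear_combination κ₀ * h
end

section
/- No-return half-plane: let Arg κ ∈ (-π/2, 0), ε measurable with n₁² ≤ ε ≤ n₂², y a nontrivial solution of y'' = -κ² ε y, and x = y'/(iκ y). Fix τ ∈ [0, -2 Arg κ]. If at some s₀ the point x(s₀) lies in the closed half-plane H⁺_τ = closure of i e^{-i(τ + Arg κ)} ℂ₋ (where ℂ₋ = {Im z < 0}), then x(s) lies in the open half-plane i e^{-i(τ + Arg κ)} ℂ₋ for all s > s₀ in the interval of definition (at points where y(s) ≠ 0). -/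
/-!
Put `c = -i e^{iτ}` and `G(s) = Re (c ȳ(s) y'(s))`. Writing `κ = |κ| e^{i Arg κ}` gives
`e^{i(τ + Arg κ)} y'/(iκy) = c ȳ y' / (|κ| |y|²)`, so `x(s)` lies in the closed (open) half-plane
exactly when `G(s) ≥ 0` (`G(s) > 0`). Along `y'' = -κ²εy`,
`G' = sin τ |y'|² - |κ|² sin(τ + 2 Arg κ) ε |y|²`; for `τ ∈ [0, -2 Arg κ]` both coefficients are
`≥ 0` and one of them is `> 0`. By uniqueness for the ODE, a nontrivial solution has neither `y`
nor `y'` vanishing on an open interval, so `G` is strictly increasing and `G(s₀) ≥ 0` forces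
`G(s) > 0` for `s > s₀`.
-/

open Complex Set Filter Topology ComplexConjugate

theorem strictMonoOn_Icc_of_hasDerivAt_nonneg {f f' : ℝ → ℝ} {a b : ℝ}
    (hf : ∀ x ∈ Icc a b, HasDerivAt f (f' x) x) (hf'₀ : ∀ x ∈ Icc a b, 0 ≤ f' x)
    (hf'ne : ∀ u ∈ Icc a b, ∀ v ∈ Icc a b, u < v → ∃ x ∈ Ioo u v, f' x ≠ 0) :
    StrictMonoOn f (Icc a b) := by
  have hmono : MonotoneOn f (Icc a b) :=
    monotoneOn_of_hasDerivWithinAt_nonneg (convex_Icc a b)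
      (fun x hx => (hf x hx).continuousAt.continuousWithinAt)
      (fun x hx => (hf x (interior_subset hx)).hasDerivWithinAt)
      (fun x hx => hf'₀ x (interior_subset hx))
  intro u hu v hv huv
  refine (hmono hu hv huv.le).lt_of_ne fun heq => ?_
  obtain ⟨x, hx, hx0⟩ := hf'ne u hu v hv huv
  have hsub : Ioo u v ⊆ Icc a b := Ioo_subset_Icc_self.trans (Icc_subset_Icc hu.1 hv.2)
  -- `f` is squeezed between `f u` and `f v = f u` on `(u, v)`
  have hconst : f =ᶠ[𝓝 x] fun _ => f u :=
    eventually_of_mem (Ioo_mem_nhds hx.1 hx.2) fun z hz =>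
      le_antisymm (heq ▸ hmono (hsub hz) hv hz.2.le) (hmono hu (hsub hz) hz.1.le)
  exact hx0 ((hf x (hsub hx)).unique ((hasDerivAt_const x (f u)).congr_of_eventuallyEq hconst))

theorem sin_nonneg_of_mem_Icc_neg_two_mul {φ τ : ℝ} (hφ : φ ∈ Ioo (-(Real.pi / 2)) 0)
    (hτ : τ ∈ Icc 0 (-2 * φ)) : 0 ≤ Real.sin τ :=
  Real.sin_nonneg_of_nonneg_of_le_pi hτ.1 (by linarith [hφ.1, hτ.2])

theorem sin_add_two_mul_nonpos_of_mem_Icc_neg_two_mul {φ τ : ℝ}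
    (hφ : φ ∈ Ioo (-(Real.pi / 2)) 0) (hτ : τ ∈ Icc 0 (-2 * φ)) :
    Real.sin (τ + 2 * φ) ≤ 0 :=
  Real.sin_nonpos_of_nonpos_of_neg_pi_le (by linarith [hτ.2]) (by linarith [hφ.1, hτ.1])

theorem sin_pos_or_sin_add_two_mul_neg_of_mem_Icc_neg_two_mul {φ τ : ℝ}
    (hφ : φ ∈ Ioo (-(Real.pi / 2)) 0) (hτ : τ ∈ Icc 0 (-2 * φ)) :
    0 < Real.sin τ ∨ Real.sin (τ + 2 * φ) < 0 := by
  rcases hτ.1.eq_or_lt with rfl | hτ₀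
  · exact Or.inr (Real.sin_neg_of_neg_of_neg_pi_lt (by linarith [hφ.2]) (by linarith [hφ.1]))
  · exact Or.inl (Real.sin_pos_of_pos_of_lt_pi hτ₀ (by linarith [hφ.1, hτ.2]))

theorem hasDerivAt_re_mul_conj_mul {y y' : ℝ → ℂ} {s : ℝ} (c q : ℂ)
    (hy : HasDerivAt y (y' s) s) (hy' : HasDerivAt y' (q * y s) s) :
    HasDerivAt (fun t => (c * conj (y t) * y' t).re)
      (c.re * normSq (y' s) + (c * q).re * normSq (y s)) s := by
  refine (reCLM.hasFDerivAt.comp_hasDerivAt s ((hy.star.const_mul c).mul hy')).congr_deriv ?_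
  have : c * star (y' s) * y' s + c * star (y s) * (q * y s)
      = c * (normSq (y' s) : ℂ) + c * q * (normSq (y s) : ℂ) := by
    rw [normSq_eq_conj_mul_self, normSq_eq_conj_mul_self]; simp only [star_def]; ring
  rw [reCLM_apply, this, add_re, re_mul_ofReal, re_mul_ofReal]

theorem re_neg_I_mul_exp (τ : ℝ) : (-I * exp (I * τ)).re = Real.sin τ := by
  rw [mul_comm I]
  simp [mul_re, exp_ofReal_mul_I_re, exp_ofReal_mul_I_im]

theorem re_neg_I_mul_exp_mul_neg_sq (τ r : ℝ) (κ : ℂ) :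
    (-I * exp (I * τ) * -(κ ^ 2 * r)).re = ‖κ‖ ^ 2 * -Real.sin (τ + 2 * κ.arg) * r := by
  have hκ : κ ^ 2 = (‖κ‖ : ℂ) ^ 2 * exp (2 * κ.arg * I) := by
    conv_lhs => rw [← norm_mul_exp_arg_mul_I κ]
    rw [mul_pow, ← exp_nat_mul]; push_cast; ring_nf
  have : -I * exp (I * τ) * -(κ ^ 2 * r)
      = ((‖κ‖ ^ 2 * r : ℝ) : ℂ) * (I * exp ((τ + 2 * κ.arg : ℝ) * I)) := by
    rw [hκ]; push_cast
    rw [add_mul, exp_add]; ring_nf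
  rw [this, re_ofReal_mul, I_mul_re, exp_ofReal_mul_I_im]
  ring

theorem re_exp_mul_div_I_mul_mul (τ : ℝ) (κ u w : ℂ) :
    (exp (I * (τ + κ.arg)) * (u / (I * κ * w))).re
      = (-I * exp (I * τ) * conj w * u).re / (‖κ‖ * normSq w) := by
  rcases eq_or_ne κ 0 with rfl | hκ
  · simp
  rcases eq_or_ne w 0 with rfl | hw
  · simp
  rw [← div_ofReal_re]
  congr 1
  have hnorm : (‖κ‖ : ℂ) ≠ 0 := ofReal_ne_zero.mpr (norm_ne_zero_iff.mpr hκ)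
  have hsq : (normSq w : ℂ) ≠ 0 := ofReal_ne_zero.mpr (normSq_pos.mpr hw).ne'
  rw [← mul_div_assoc, div_eq_div_iff (by simp [hκ, hw]) (by push_cast; exact mul_ne_zero hnorm hsq)]
  conv_rhs => rw [← norm_mul_exp_arg_mul_I κ]
  push_cast
  rw [mul_add, exp_add, normSq_eq_conj_mul_self]
  ring_nf
  rw [I_sq]; ring

section SecondOrderLinear

variable {a b : ℝ} {q y y' : ℝ → ℂ}

theorem eqOn_zero_of_eq_zero_of_deriv_eq_zero {C : ℝ} (hq : ∀ s ∈ Icc a b, ‖q s‖ ≤ C)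
    (hy : ∀ s ∈ Icc a b, HasDerivAt y (y' s) s)
    (hy' : ∀ s ∈ Icc a b, HasDerivAt y' (q s * y s) s)
    {t : ℝ} (ht : t ∈ Icc a b) (h₀ : y t = 0) (h₀' : y' t = 0) :
    EqOn y 0 (Icc a b) := by
  set v : ℝ → ℂ × ℂ → ℂ × ℂ := fun s p => (p.2, q s * p.1)
  have hv : ∀ s ∈ Icc a b, LipschitzOnWith (max 1 C.toNNReal) (v s) univ := by
    intro s hs
    refine ((LipschitzWith.prod_snd.prodMk
      ((lipschitzWith_smul (q s)).comp LipschitzWith.prod_fst)).weaken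
      (max_le_max le_rfl ?_)).lipschitzOnWith
    rw [mul_one, ← NNReal.coe_le_coe, coe_nnnorm]
    exact (hq s hs).trans (Real.le_coe_toNNReal C)
  have hf : ∀ s ∈ Icc a b, HasDerivAt (fun s => (y s, y' s)) (v s (y s, y' s)) s :=
    fun s hs => (hy s hs).prodMk (hy' s hs)
  have hzero : ∀ s, HasDerivAt (fun _ => 0) (v s 0) s := fun s => by
    rw [show v s 0 = 0 from Prod.ext rfl (mul_zero _)]
    exact hasDerivAt_const s 0
  have hcont : ContinuousOn (fun s => (y s, y' s)) (Icc a b) :=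
    fun s hs => (hf s hs).continuousAt.continuousWithinAt
  have h_t : (y t, y' t) = 0 := Prod.ext h₀ h₀'
  intro s hs
  rcases le_total t s with hts | hst
  · have hsub : Icc t s ⊆ Icc a b := Icc_subset_Icc ht.1 hs.2
    exact congrArg Prod.fst <| ODE_solution_unique_of_mem_Icc_right
      (fun r hr => hv r (hsub (Ico_subset_Icc_self hr))) (hcont.mono hsub)
      (fun r hr => (hf r (hsub (Ico_subset_Icc_self hr))).hasDerivWithinAt)
      (fun _ _ => trivial) continuousOn_const (fun r _ => (hzero r).hasDerivWithinAt)
      (fun _ _ => trivial) h_t ⟨hts, le_rfl⟩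
  · have hsub : Icc s t ⊆ Icc a b := Icc_subset_Icc hs.1 ht.2
    exact congrArg Prod.fst <| ODE_solution_unique_of_mem_Icc_left
      (fun r hr => hv r (hsub (Ioc_subset_Icc_self hr))) (hcont.mono hsub)
      (fun r hr => (hf r (hsub (Ioc_subset_Icc_self hr))).hasDerivWithinAt)
      (fun _ _ => trivial) continuousOn_const (fun r _ => (hzero r).hasDerivWithinAt)
      (fun _ _ => trivial) h_t ⟨le_rfl, hst⟩

theorem exists_mem_Ioo_ne_zero_and_deriv_ne_zero {C : ℝ} (hq : ∀ s ∈ Icc a b, ‖q s‖ ≤ C)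
    (hq₀ : ∀ s ∈ Icc a b, q s ≠ 0)
    (hy : ∀ s ∈ Icc a b, HasDerivAt y (y' s) s)
    (hy' : ∀ s ∈ Icc a b, HasDerivAt y' (q s * y s) s)
    (hnt : ∃ s ∈ Icc a b, y s ≠ 0) {u v : ℝ} (huv : u < v) (hsub : Icc u v ⊆ Icc a b) :
    (∃ t ∈ Ioo u v, y t ≠ 0) ∧ ∃ t ∈ Ioo u v, y' t ≠ 0 := by
  obtain ⟨r, hr, hyr⟩ := hnt
  obtain ⟨m, hm⟩ := nonempty_Ioo.mpr huv
  have hmI : m ∈ Icc a b := hsub (Ioo_subset_Icc_self hm)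
  have hvanish : ∀ {f : ℝ → ℂ} {f' : ℂ}, HasDerivAt f f' m → EqOn f 0 (Ioo u v) → f' = 0 :=
    fun hf hf₀ => hf.unique ((hasDerivAt_const m 0).congr_of_eventuallyEq
      (eventually_of_mem (Ioo_mem_nhds hm.1 hm.2) hf₀))
  have hboth : ¬(y m = 0 ∧ y' m = 0) := fun ⟨h, h'⟩ =>
    hyr (eqOn_zero_of_eq_zero_of_deriv_eq_zero hq hy hy' hmI h h' hr)
  constructor
  · by_contra! H
    exact hboth ⟨H m hm, hvanish (hy m hmI) H⟩
  · by_contra! H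
    have : q m * y m = 0 := hvanish (hy' m hmI) H
    exact hboth ⟨(mul_eq_zero.mp this).resolve_left (hq₀ m hmI), H m hm⟩

theorem strictMonoOn_re_mul_conj_mul {C : ℝ} (c : ℂ) (hq : ∀ s ∈ Icc a b, ‖q s‖ ≤ C)
    (hq₀ : ∀ s ∈ Icc a b, q s ≠ 0)
    (hy : ∀ s ∈ Icc a b, HasDerivAt y (y' s) s)
    (hy' : ∀ s ∈ Icc a b, HasDerivAt y' (q s * y s) s)
    (hnt : ∃ s ∈ Icc a b, y s ≠ 0)
    (hc : 0 ≤ c.re) (hcq : ∀ s ∈ Icc a b, 0 ≤ (c * q s).re)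
    (hpos : 0 < c.re ∨ ∀ s ∈ Icc a b, 0 < (c * q s).re) :
    StrictMonoOn (fun t => (c * conj (y t) * y' t).re) (Icc a b) := by
  refine strictMonoOn_Icc_of_hasDerivAt_nonneg
    (fun s hs => hasDerivAt_re_mul_conj_mul c (q s) (hy s hs) (hy' s hs))
    (fun s hs => add_nonneg (mul_nonneg hc (normSq_nonneg _))
      (mul_nonneg (hcq s hs) (normSq_nonneg _))) fun u hu v hv huv => ?_
  have hsub := Icc_subset_Icc hu.1 hv.2
  obtain ⟨⟨t, ht, hyt⟩, t', ht', hy't⟩ :=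
    exists_mem_Ioo_ne_zero_and_deriv_ne_zero hq hq₀ hy hy' hnt huv hsub
  rcases hpos with hc₀ | hcq₀
  · exact ⟨t', ht', (add_pos_of_pos_of_nonneg (mul_pos hc₀ (normSq_pos.mpr hy't))
      (mul_nonneg (hcq t' (hsub (Ioo_subset_Icc_self ht'))) (normSq_nonneg _))).ne'⟩
  · exact ⟨t, ht, (add_pos_of_nonneg_of_pos (mul_nonneg hc (normSq_nonneg _))
      (mul_pos (hcq₀ t (hsub (Ioo_subset_Icc_self ht))) (normSq_pos.mpr hyt))).ne'⟩

end SecondOrderLinear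

theorem stmt19_general (sm sp n₁ n₂ : ℝ) (hn₁ : 0 < n₁)
    (ε : ℝ → ℝ) (hε : ∀ s ∈ Set.Icc sm sp, n₁ ^ 2 ≤ ε s ∧ ε s ≤ n₂ ^ 2)
    (κ : ℂ) (hκarg : κ.arg ∈ Set.Ioo (-(Real.pi / 2)) 0)
    (τ : ℝ) (hτ : τ ∈ Set.Icc 0 (-2 * κ.arg))
    (y y' : ℝ → ℂ)
    (hy : ∀ s ∈ Set.Icc sm sp, HasDerivAt y (y' s) s)
    (hy' : ∀ s ∈ Set.Icc sm sp, HasDerivAt y' (-(κ ^ 2 * (ε s : ℂ) * y s)) s)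
    (s₀ : ℝ) (hs₀ : s₀ ∈ Set.Icc sm sp) (hy₀ : y s₀ ≠ 0)
    (hstart : 0 ≤ (Complex.exp (Complex.I * ((τ : ℂ) + (κ.arg : ℂ))) *
        (y' s₀ / (Complex.I * κ * y s₀))).re) :
    ∀ s ∈ Set.Icc sm sp, s₀ < s → y s ≠ 0 →
      0 < (Complex.exp (Complex.I * ((τ : ℂ) + (κ.arg : ℂ))) *
        (y' s / (Complex.I * κ * y s))).re := by
  intro s hs hs₀s hys
  have hκ : κ ≠ 0 := by rintro rfl; simp at hκarg
  have hε₀ : ∀ t ∈ Icc sm sp, 0 < ε t := fun t ht => (pow_pos hn₁ 2).trans_le (hε t ht).1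
  have hq : ∀ t ∈ Icc sm sp, ‖-(κ ^ 2 * (ε t : ℂ))‖ ≤ ‖κ‖ ^ 2 * n₂ ^ 2 := fun t ht => by
    rw [norm_neg, norm_mul, norm_pow, norm_real, Real.norm_of_nonneg (hε₀ t ht).le]
    exact mul_le_mul_of_nonneg_left (hε t ht).2 (by positivity)
  have hq₀ : ∀ t ∈ Icc sm sp, -(κ ^ 2 * (ε t : ℂ)) ≠ 0 := fun t ht => by
    simp [hκ, (hε₀ t ht).ne']
  have hsin := neg_nonneg.mpr (sin_add_two_mul_nonpos_of_mem_Icc_neg_two_mul hκarg hτ)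
  have hmono := strictMonoOn_re_mul_conj_mul (-I * exp (I * τ)) hq hq₀ hy
    (fun t ht => by simpa only [neg_mul] using hy' t ht) ⟨s₀, hs₀, hy₀⟩
    (by rw [re_neg_I_mul_exp]; exact sin_nonneg_of_mem_Icc_neg_two_mul hκarg hτ)
    (fun t ht => by rw [re_neg_I_mul_exp_mul_neg_sq]; have := hε₀ t ht; positivity)
    (by
      rw [re_neg_I_mul_exp]
      refine (sin_pos_or_sin_add_two_mul_neg_of_mem_Icc_neg_two_mul hκarg hτ).imp id
        fun h t ht => ?_
      rw [re_neg_I_mul_exp_mul_neg_sq]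
      have := hε₀ t ht; have := neg_pos.mpr h; positivity)
  have hden : ∀ {w : ℂ}, w ≠ 0 → 0 < ‖κ‖ * normSq w := fun hw =>
    mul_pos (norm_pos_iff.mpr hκ) (normSq_pos.mpr hw)
  rw [re_exp_mul_div_I_mul_mul, le_div_iff₀ (hden hy₀), zero_mul] at hstart
  rw [re_exp_mul_div_I_mul_mul, div_pos_iff_of_pos_right (hden hys)]
  exact hstart.trans_lt (hmono hs₀ hs hs₀s)

/-- No-return half-plane. With `Arg κ ∈ (-π/2,0)`, `τ ∈ [0, -2 Arg κ]`,
`y` a nontrivial solution of `y'' = -κ² ε y` (`n₁² ≤ ε ≤ n₂²`) and `x = y'/(iκ y)`: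
if at some `s₀` (where `y(s₀) ≠ 0`) the point `x(s₀)` lies in the closed half-plane
`{Re(e^{i(τ + Arg κ)} z) ≥ 0}` (the closure of `i e^{-i(τ+Arg κ)} ℂ₋`), then for all
later `s` in the interval with `y(s) ≠ 0`, `x(s)` lies in the open half-plane
`{Re(e^{i(τ + Arg κ)} z) > 0}`. -/
theorem stmt19 (sm sp n₁ n₂ : ℝ) (hsm : sm < sp) (hn₁ : 0 < n₁) (hn12 : n₁ < n₂)
    (ε : ℝ → ℝ) (hε : ∀ s ∈ Set.Icc sm sp, n₁ ^ 2 ≤ ε s ∧ ε s ≤ n₂ ^ 2)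
    (κ : ℂ) (hκarg : κ.arg ∈ Set.Ioo (-(Real.pi / 2)) 0)
    (τ : ℝ) (hτ : τ ∈ Set.Icc 0 (-2 * κ.arg))
    (y y' : ℝ → ℂ)
    (hy : ∀ s ∈ Set.Icc sm sp, HasDerivAt y (y' s) s)
    (hy' : ∀ s ∈ Set.Icc sm sp, HasDerivAt y' (-(κ ^ 2 * (ε s : ℂ) * y s)) s)
    (hnt : ∃ s ∈ Set.Icc sm sp, y s ≠ 0)
    (s₀ : ℝ) (hs₀ : s₀ ∈ Set.Icc sm sp) (hy₀ : y s₀ ≠ 0)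
    (hstart : 0 ≤ (Complex.exp (Complex.I * ((τ : ℂ) + (κ.arg : ℂ))) *
        (y' s₀ / (Complex.I * κ * y s₀))).re) :
    ∀ s ∈ Set.Icc sm sp, s₀ < s → y s ≠ 0 →
      0 < (Complex.exp (Complex.I * ((τ : ℂ) + (κ.arg : ℂ))) *
        (y' s / (Complex.I * κ * y s))).re :=
  stmt19_general sm sp n₁ n₂ hn₁ ε hε κ hκarg τ hτ y y' hy hy' s₀ hs₀ hy₀ hstart
end
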